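/- arXiv:2508.14714 — 3 statements merged into one kernel-verified Lean document; each statement's English description precedes it below -/
import Mathlib

section
/- Let n ≥ 4 be an integer, let z : ZMod n → ℂ be injective, and let (A,B,C,D) be a cyclic 4-partition of ZMod n. Then the extended u-relation holds identically: ∏_{x∈A, y∈C} u_{xy}(z) + ∏_{x∈B, y∈D} u_{xy}(z) = 1. -/
namespace M0n

/-- `{i, j}` is a chord of the `n`-gon: `j ∉ {i-1, i, i+1}`. -/
def IsChord (n : ℕ) (p : Sym2 (ZMod n)) : Prop :=
  ∀ i j : ZMod n, p = s(i, j) → j ≠ i - 1 ∧ j ≠ i ∧ j ≠ i + 1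

instance (n : ℕ) [NeZero n] : DecidablePred (IsChord n) := fun p =>
  inferInstanceAs (Decidable (∀ i j : ZMod n, p = s(i, j) → j ≠ i - 1 ∧ j ≠ i ∧ j ≠ i + 1))

/-- The finite set `E` of chords of the `n`-gon. -/
def chords (n : ℕ) [NeZero n] : Finset (Sym2 (ZMod n)) :=
  Finset.univ.filter (IsChord n)

/-- `x` lies in the cyclic open interval `{i+1, …, j-1}` from `i` to `j`. -/
def CycBtw {n : ℕ} (i x j : ZMod n) : Prop :=
  0 < (x - i).val ∧ (x - i).val < (j - i).val

instance {n : ℕ} (i x j : ZMod n) : Decidable (CycBtw i x j) :=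
  inferInstanceAs (Decidable (0 < (x - i).val ∧ (x - i).val < (j - i).val))

/-- Two chords cross: exactly one endpoint of `q` lies in the cyclic open interval
from `i` to `j`, for every ordered representation `(i, j)` of `p`. -/
def Crosses (n : ℕ) (p q : Sym2 (ZMod n)) : Prop :=
  ∀ i j k l : ZMod n, p = s(i, j) → q = s(k, l) → Xor' (CycBtw i k j) (CycBtw i l j)

instance (n : ℕ) [NeZero n] (p q : Sym2 (ZMod n)) : Decidable (Crosses n p q) :=
  inferInstanceAs (Decidable (∀ i j k l : ZMod n,
    p = s(i, j) → q = s(k, l) → Xor (CycBtw i k j) (CycBtw i l j)))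

/-- The dihedral coordinate (cross-ratio)
`u_{ij}(z) = ((z i - z (j+1)) (z (i+1) - z j)) / ((z i - z j) (z (i+1) - z (j+1)))`,
well defined on unordered pairs. -/
def u {n : ℕ} {K : Type*} [Field K] (z : ZMod n → K) : Sym2 (ZMod n) → K :=
  Sym2.lift ⟨fun i j =>
    ((z i - z (j + 1)) * (z (i + 1) - z j)) / ((z i - z j) * (z (i + 1) - z (j + 1))), by
      intro i j
      have h1 : (z i - z (j + 1)) * (z (i + 1) - z j)
          = (z j - z (i + 1)) * (z (j + 1) - z i) := by ring
      have h2 : (z i - z j) * (z (i + 1) - z (j + 1))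
          = (z j - z i) * (z (j + 1) - z (i + 1)) := by ring
      dsimp only
      rw [h1, h2]⟩

/-- The cyclic interval `{a, a+1, …, a+m-1}` in `ZMod n`. -/
def cycInt {n : ℕ} (a : ZMod n) (m : ℕ) : Finset (ZMod n) :=
  (Finset.range m).image fun t : ℕ => a + (t : ZMod n)

/-- A partition of `ZMod n` into four nonempty cyclic intervals `A, B, C, D`
appearing in this cyclic order. -/
structure CyclicFourPartition (n : ℕ) where
  a : ZMod n
  p : ℕ
  q : ℕ
  r : ℕ
  t : ℕ
  hp : 0 < p
  hq : 0 < q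
  hr : 0 < r
  ht : 0 < t
  hsum : p + q + r + t = n

namespace CyclicFourPartition

variable {n : ℕ} (P : CyclicFourPartition n)

def A : Finset (ZMod n) := cycInt P.a P.p
def B : Finset (ZMod n) := cycInt (P.a + (P.p : ZMod n)) P.q
def C : Finset (ZMod n) := cycInt (P.a + (P.p : ZMod n) + (P.q : ZMod n)) P.r
def D : Finset (ZMod n) := cycInt (P.a + (P.p : ZMod n) + (P.q : ZMod n) + (P.r : ZMod n)) P.t

end CyclicFourPartition

/-- A sign pattern is consistent if it does not contradict any extended u-relation:
for every cyclic 4-partition `(A,B,C,D)`, one of the two products of signs is `1`. -/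
def Consistent (n : ℕ) (s : Sym2 (ZMod n) → ℤ) : Prop :=
  ∀ P : CyclicFourPartition n,
    (∏ x ∈ P.A, ∏ y ∈ P.C, s s(x, y)) = 1 ∨ (∏ x ∈ P.B, ∏ y ∈ P.D, s s(x, y)) = 1

/-- A sign pattern is realizable if it is the sign vector of the dihedral coordinates
of some injective real configuration. -/
def Realizable (n : ℕ) [NeZero n] (s : Sym2 (ZMod n) → ℤ) : Prop :=
  ∃ z : ZMod n → ℝ, Function.Injective z ∧ ∀ e ∈ chords n, Real.sign (u z e) = (s e : ℝ)

/-- The length of a chord `{i,j}`: `min (d, n - d)` where `d = (j - i).val`. -/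
def chordLength (n : ℕ) (p : Sym2 (ZMod n)) : ℕ :=
  Sym2.lift ⟨fun i j => min (j - i).val (i - j).val, fun _ _ => min_comm _ _⟩ p

/-- `Neg z`: the number of negative chords of a real configuration. -/
noncomputable def negCount (n : ℕ) [NeZero n] (z : ZMod n → ℝ) : ℕ :=
  Set.ncard {e : Sym2 (ZMod n) | e ∈ chords n ∧ u z e < 0}

/-- The set of real points of `M_{0,n}` in its dihedral embedding:
nowhere-zero real solutions of all primitive u-relations in `ℝ^E`. -/
def Vset (n : ℕ) [NeZero n] : Set ({e : Sym2 (ZMod n) // e ∈ chords n} → ℝ) :=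
  {w | (∀ c, w c ≠ 0) ∧ ∀ c,
    w c + ∏ e ∈ Finset.univ.filter
        (fun e : {e : Sym2 (ZMod n) // e ∈ chords n} => Crosses n e.1 c.1), w e = 1}

/-- The part `M_{0,n}(ℝ_s)` of `V` in the open orthant given by the sign pattern `s`. -/
def VsSet (n : ℕ) [NeZero n] (s : Sym2 (ZMod n) → ℤ) :
    Set ({e : Sym2 (ZMod n) // e ∈ chords n} → ℝ) :=
  {w ∈ Vset n | ∀ c : {e : Sym2 (ZMod n) // e ∈ chords n}, Real.sign (w c) = (s c.1 : ℝ)}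

/-!
Each dihedral coordinate `u z s(x, y)` is the mixed ratio
`f(x, y+1) f(x+1, y) / (f(x, y) f(x+1, y+1))` of `f(x, y) = z x - z y`, so its product over a
rectangle `A × C` of chords telescopes in both directions to the cross-ratio of the four corner
points `z a, z b, z c, z d` (the first points of `A, B, C, D`). Likewise for `B × D`, and the
two cross-ratios obtained are `[a, b; c, d]` and its complement, which sum to `1`.
-/

lemma u_mk {n : ℕ} {K : Type*} [Field K] (z : ZMod n → K) (i j : ZMod n) :
    u z s(i, j)
      = ((z i - z (j + 1)) * (z (i + 1) - z j)) / ((z i - z j) * (z (i + 1) - z (j + 1))) := rfl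

lemma prod_range_div_of_ne_zero {G : Type*} [CommGroupWithZero G] (f : ℕ → G) (m : ℕ)
    (hf : ∀ i ≤ m, f i ≠ 0) :
    ∏ i ∈ Finset.range m, f (i + 1) / f i = f m / f 0 := by
  induction m with
  | zero => simp [div_self (hf 0 le_rfl)]
  | succ m ih =>
    rw [Finset.prod_range_succ, ih fun i hi => hf i (by omega), mul_comm,
      div_mul_div_cancel₀ (hf m (by omega))]

lemma prod_range_prod_range_mixed_div {G : Type*} [CommGroupWithZero G] (f : ℕ → ℕ → G)
    (p r : ℕ) (hf : ∀ s ≤ p, ∀ t ≤ r, f s t ≠ 0) :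
    ∏ s ∈ Finset.range p, ∏ t ∈ Finset.range r,
        f s (t + 1) * f (s + 1) t / (f s t * f (s + 1) (t + 1))
      = f 0 r * f p 0 / (f 0 0 * f p r) := by
  have row : ∀ s < p, ∏ t ∈ Finset.range r,
      f s (t + 1) * f (s + 1) t / (f s t * f (s + 1) (t + 1))
        = f (s + 1) 0 / f (s + 1) r / (f s 0 / f s r) := by
    intro s hs
    calc _ = ∏ t ∈ Finset.range r, f s (t + 1) / f (s + 1) (t + 1) / (f s t / f (s + 1) t) :=
          Finset.prod_congr rfl fun t _ => by
            rw [div_div_div_eq, mul_comm (f s t), mul_comm (f (s + 1) (t + 1))]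
      _ = f s r / f (s + 1) r / (f s 0 / f (s + 1) 0) :=
          prod_range_div_of_ne_zero (fun t => f s t / f (s + 1) t) r fun t ht =>
            div_ne_zero (hf s hs.le t ht) (hf (s + 1) hs t ht)
      _ = _ := by rw [div_div_div_eq, div_div_div_eq, mul_comm]
  rw [Finset.prod_congr rfl fun s hs => row s (Finset.mem_range.1 hs),
    prod_range_div_of_ne_zero (fun s => f s 0 / f s r) p fun s hs =>
      div_ne_zero (hf s hs 0 (Nat.zero_le r)) (hf s hs r le_rfl),
    div_div_div_eq, mul_comm (f 0 0), mul_comm (f p 0)]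

lemma natCast_ne_natCast_of_lt_of_sub_lt {n x y : ℕ} (hxy : x < y) (hyx : y - x < n) :
    (x : ZMod n) ≠ (y : ZMod n) := by
  rw [Ne, ZMod.natCast_eq_natCast_iff, Nat.modEq_iff_dvd' hxy.le]
  exact fun h => absurd (Nat.le_of_dvd (by omega) h) (by omega)

lemma apply_add_natCast_ne {n : ℕ} {K : Type*} {z : ZMod n → K} (hz : Function.Injective z)
    (a : ZMod n) {x y : ℕ} (hxy : x < y) (hyx : y - x < n) :
    z (a + x) ≠ z (a + y) :=
  fun h => natCast_ne_natCast_of_lt_of_sub_lt hxy hyx (add_left_cancel (hz h))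

lemma prod_cycInt {n : ℕ} {M : Type*} [CommMonoid M] (a : ZMod n) {m : ℕ} (hm : m ≤ n)
    (f : ZMod n → M) :
    ∏ x ∈ cycInt a m, f x = ∏ t ∈ Finset.range m, f (a + (t : ZMod n)) := by
  refine Finset.prod_image fun i hi j hj h => ?_
  simp only [Finset.coe_range, Set.mem_Iio] at hi hj
  by_contra hij
  rcases Nat.lt_or_gt_of_ne hij with hlt | hlt
  · exact natCast_ne_natCast_of_lt_of_sub_lt hlt (by omega) (add_left_cancel h)
  · exact natCast_ne_natCast_of_lt_of_sub_lt hlt (by omega) (add_left_cancel h).symm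

lemma prod_cycInt_prod_cycInt_u {n : ℕ} {K : Type*} [Field K] (z : ZMod n → K) (a c : ZMod n)
    {p r : ℕ} (hp : p ≤ n) (hr : r ≤ n)
    (H : ∀ s ≤ p, ∀ t ≤ r, z (a + (s : ZMod n)) ≠ z (c + (t : ZMod n))) :
    ∏ x ∈ cycInt a p, ∏ y ∈ cycInt c r, u z s(x, y)
      = (z a - z (c + r)) * (z (a + p) - z c) / ((z a - z c) * (z (a + p) - z (c + r))) := by
  simp_rw [prod_cycInt a hp, prod_cycInt c hr, u_mk, add_assoc, ← Nat.cast_add_one]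
  simpa using prod_range_prod_range_mixed_div (fun s t => z (a + s) - z (c + t)) p r
    fun s hs t ht => sub_ne_zero_of_ne (H s hs t ht)

lemma crossRatio_add_crossRatio {K : Type*} [Field K] {w₀ w₁ w₂ w₃ : K} (h₀₂ : w₀ ≠ w₂)
    (h₁₃ : w₁ ≠ w₃) :
    (w₀ - w₃) * (w₁ - w₂) / ((w₀ - w₂) * (w₁ - w₃))
      + (w₁ - w₀) * (w₂ - w₃) / ((w₁ - w₃) * (w₂ - w₀)) = 1 := by
  have h₂₀ : w₂ - w₀ ≠ 0 := sub_ne_zero_of_ne h₀₂.symm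
  field_simp [sub_ne_zero_of_ne h₀₂, sub_ne_zero_of_ne h₁₃]
  ring

theorem extended_u_relation_general (n : ℕ) (z : ZMod n → ℂ)
    (hz : Function.Injective z) (P : CyclicFourPartition n) :
    (∏ x ∈ P.A, ∏ y ∈ P.C, u z s(x, y)) + (∏ x ∈ P.B, ∏ y ∈ P.D, u z s(x, y)) = 1 := by
  obtain ⟨a, p, q, r, t, hp, hq, hr, ht, hsum⟩ := P
  have hne : ∀ {x y : ℕ}, x < y → y - x < n → z (a + x) ≠ z (a + y) :=
    apply_add_natCast_ne hz a
  have hAC := prod_cycInt_prod_cycInt_u z a (a + p + q) (p := p) (r := r) (by omega) (by omega)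
    fun s hs v hv => by simpa [add_assoc] using hne (x := s) (y := p + q + v) (by omega) (by omega)
  have hBD := prod_cycInt_prod_cycInt_u z (a + p) (a + p + q + r) (p := q) (r := t) (by omega)
    (by omega) fun s hs v hv => by
      simpa [add_assoc] using hne (x := p + s) (y := p + q + r + v) (by omega) (by omega)
  have hwrap : a + p + q + r + t = a := by
    have h : ((p + q + r + t : ℕ) : ZMod n) = 0 := hsum ▸ ZMod.natCast_self n
    push_cast at h
    linear_combination h
  simp only [CyclicFourPartition.A, CyclicFourPartition.B, CyclicFourPartition.C,
    CyclicFourPartition.D]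
  rw [hAC, hBD, hwrap]
  refine crossRatio_add_crossRatio ?_ ?_
  · simpa [add_assoc] using hne (x := 0) (y := p + q) (by omega) (by omega)
  · simpa [add_assoc] using hne (x := p) (y := p + q + r) (by omega) (by omega)

/-- For `n ≥ 4`, an injective `z : ZMod n → ℂ` and a cyclic 4-partition
`(A,B,C,D)` of `ZMod n`, the extended u-relation holds:
`∏_{x∈A, y∈C} u_{xy}(z) + ∏_{x∈B, y∈D} u_{xy}(z) = 1`. -/
theorem extended_u_relation (n : ℕ) [NeZero n] (hn : 4 ≤ n) (z : ZMod n → ℂ)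
    (hz : Function.Injective z) (P : CyclicFourPartition n) :
    (∏ x ∈ P.A, ∏ y ∈ P.C, u z s(x, y)) + (∏ x ∈ P.B, ∏ y ∈ P.D, u z s(x, y)) = 1 :=
  extended_u_relation_general n z hz P

end M0n
end

section
/- Let n ≥ 4 be an integer. If u : E → ℂ has u(e) ≠ 0 for every chord e and satisfies every primitive u-relation, i.e. u({i,j}) + ∏_{e ∈ E, e crosses {i,j}} u(e) = 1 for every chord {i,j}, then there exists an injective map z : ZMod n → ℂ with u_e(z) = u(e) for every chord e ∈ E. -/
/-!
Put `z₀ = 0`, `z₁ = ∞`, `z₂ = 1` and define `z_{k+1} = v{0,k} · z_k`, so that the dihedral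
coordinates of the fan of chords at `0` are the prescribed ones. The remaining chords `{r, j}`
are treated by induction on `r`, and for fixed `r` by decreasing `j`. The crossing rectangles of
`{r, j}` and `{r+1, j}` differ by one row and one column of chords that are already known, so the
quotient of the two u-relations determines `v{r+1,j}`; the cross-ratios satisfy the same quotient
relation because the row and column products telescope. Non-vanishing of `v` then shows that all
brackets `[z_p z_q]` are non-zero, i.e. the points are distinct, and a generic Möbius transformation
moves `∞` to a finite point.
-/

namespace M0n

section Chords

variable {n : ℕ}

/-- `(i, j)` with `i < j < n` represents a chord; every chord has exactly one such
representative. -/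
def IsChordRep (n i j : ℕ) : Prop := i + 2 ≤ j ∧ j < n ∧ j + 2 ≤ n + i

theorem natCast_eq_natCast_iff_of_lt_two_mul {a b : ℕ} (ha : a < 2 * n) (hb : b < 2 * n) :
    (a : ZMod n) = b ↔ a = b ∨ a = b + n ∨ b = a + n := by
  rw [ZMod.natCast_eq_natCast_iff']
  have hmod : ∀ c, c < 2 * n → c < n ∧ c % n = c ∨ n ≤ c ∧ c % n = c - n := fun c hc => by
    rcases Nat.lt_or_ge c n with h | h
    · exact Or.inl ⟨h, Nat.mod_eq_of_lt h⟩
    · exact Or.inr ⟨h, by rw [Nat.mod_eq_sub_mod h, Nat.mod_eq_of_lt (show c - n < n by omega)]⟩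
  rcases hmod a ha with h | h <;> rcases hmod b hb with h' | h' <;> omega

theorem val_natCast_sub_natCast {a b : ℕ} (ha : a < n) (hb : b < n) :
    ((a : ZMod n) - b).val = if b ≤ a then a - b else a + n - b := by
  have : (a : ZMod n) - b = ((a + (n - b) : ℕ) : ZMod n) := by
    push_cast [Nat.cast_sub hb.le, ZMod.natCast_self]
    ring
  rw [this, ZMod.val_natCast]
  split_ifs with h
  · rw [show a + (n - b) = a - b + n by omega, Nat.add_mod_right, Nat.mod_eq_of_lt (by omega)]
  · rw [Nat.mod_eq_of_lt (by omega)]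
    omega

theorem cycBtw_natCast_iff {a x b : ℕ} (ha : a < n) (hx : x < n) (hb : b < n) :
    CycBtw (a : ZMod n) x b ↔ a < x ∧ x < b ∨ x < b ∧ b < a ∨ b < a ∧ a < x := by
  unfold CycBtw
  rw [val_natCast_sub_natCast hx ha, val_natCast_sub_natCast hb ha]
  split_ifs <;> omega

theorem isChord_mk_iff (x y : ZMod n) :
    IsChord n s(x, y) ↔ (y ≠ x - 1 ∧ y ≠ x ∧ y ≠ x + 1) ∧ (x ≠ y - 1 ∧ x ≠ y ∧ x ≠ y + 1) := by
  refine ⟨fun h => ⟨h x y rfl, h y x Sym2.eq_swap⟩, fun h i j hij => ?_⟩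
  rcases Sym2.eq_iff.mp hij with ⟨rfl, rfl⟩ | ⟨rfl, rfl⟩
  exacts [h.1, h.2]

theorem mk_natCast_mem_chords_iff [NeZero n] {a b : ℕ} (ha : a < n) (hb : b < n) :
    s((a : ZMod n), (b : ZMod n)) ∈ chords n ↔ IsChordRep n a b ∨ IsChordRep n b a := by
  have hcast : ∀ c d : ℕ, c < n → d < n →
      (((c : ZMod n) = d - 1 ↔ c + 1 = d ∨ c + 1 = d + n) ∧ ((c : ZMod n) = d ↔ c = d) ∧
        ((c : ZMod n) = d + 1 ↔ c = d + 1 ∨ c + n = d + 1)) := by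
    intro c d hc hd
    rw [eq_sub_iff_add_eq, ← Nat.cast_one, ← Nat.cast_add, ← Nat.cast_add,
      natCast_eq_natCast_iff_of_lt_two_mul (by omega) (by omega),
      natCast_eq_natCast_iff_of_lt_two_mul (by omega) (by omega),
      natCast_eq_natCast_iff_of_lt_two_mul (by omega) (by omega)]
    omega
  simp only [chords, Finset.mem_filter, Finset.mem_univ, true_and, isChord_mk_iff, ne_eq,
    (hcast a b ha hb).1, (hcast a b ha hb).2.1, (hcast a b ha hb).2.2, (hcast b a hb ha).1,
    (hcast b a hb ha).2.1, (hcast b a hb ha).2.2, IsChordRep]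
  omega

theorem IsChordRep.mk_mem_chords [NeZero n] {a b : ℕ} (h : IsChordRep n a b) :
    s((a : ZMod n), (b : ZMod n)) ∈ chords n :=
  (mk_natCast_mem_chords_iff (by unfold IsChordRep at h; omega) h.2.1).2 (Or.inl h)

theorem exists_isChordRep_of_mem_chords [NeZero n] {e : Sym2 (ZMod n)} (he : e ∈ chords n) :
    ∃ a b, IsChordRep n a b ∧ e = s((a : ZMod n), (b : ZMod n)) := by
  induction e using Sym2.ind with
  | _ x y =>
  rw [← ZMod.natCast_zmod_val x, ← ZMod.natCast_zmod_val y] at he ⊢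
  rcases (mk_natCast_mem_chords_iff (ZMod.val_lt x) (ZMod.val_lt y)).1 he with h | h
  · exact ⟨_, _, h, rfl⟩
  · exact ⟨_, _, h, Sym2.eq_swap⟩

theorem crosses_mk_iff (x y k l : ZMod n) :
    Crosses n s(x, y) s(k, l) ↔
      Xor (CycBtw x k y) (CycBtw x l y) ∧ Xor (CycBtw y k x) (CycBtw y l x) := by
  refine ⟨fun h => ⟨h x y k l rfl rfl, h y x k l Sym2.eq_swap rfl⟩, fun h i j i' j' hij hkl => ?_⟩
  rcases Sym2.eq_iff.mp hij with ⟨rfl, rfl⟩ | ⟨rfl, rfl⟩ <;>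
    rcases Sym2.eq_iff.mp hkl with ⟨rfl, rfl⟩ | ⟨rfl, rfl⟩
  exacts [h.1, h.1.symm, h.2, h.2.symm]

theorem exists_natCast_eq_of_lt_two_mul {l : ℕ} (hl : l < 2 * n) :
    ∃ l' < n, (l : ZMod n) = l' ∧ (l' = l ∨ l' + n = l) := by
  rcases Nat.lt_or_ge l n with h | h
  · exact ⟨l, h, rfl, Or.inl rfl⟩
  · exact ⟨l - n, by omega, (natCast_eq_natCast_iff_of_lt_two_mul hl (by omega)).2 (by omega),
      Or.inr (by omega)⟩

theorem injOn_rectangle {i j : ℕ} (hij : IsChordRep n i j) :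
    Set.InjOn (fun p : ℕ × ℕ => s((p.1 : ZMod n), (p.2 : ZMod n)))
      ↑(Finset.Ico (i + 1) j ×ˢ Finset.Ico (j + 1) (i + n)) := by
  obtain ⟨hij, hjn, hji⟩ := hij
  rintro ⟨k, l⟩ hkl ⟨k', l'⟩ hkl' heq
  simp only [Finset.coe_product, Set.mem_prod, Finset.coe_Ico, Set.mem_Ico] at hkl hkl'
  rcases Sym2.eq_iff.mp heq with ⟨hk, hl⟩ | ⟨hk, hl⟩ <;>
    rw [natCast_eq_natCast_iff_of_lt_two_mul (by omega) (by omega)] at hk hl <;>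
    simp only [Prod.mk.injEq] <;> omega

variable [NeZero n]

theorem mk_natCast_mem_chords {k l : ℕ} (hk : k < n) (hkl : k + 2 ≤ l) (hlk : l + 2 ≤ k + n) :
    s((k : ZMod n), (l : ZMod n)) ∈ chords n := by
  obtain ⟨l', hl'n, hll', hl'⟩ := exists_natCast_eq_of_lt_two_mul (n := n) (l := l) (by omega)
  rw [hll', mk_natCast_mem_chords_iff hk hl'n]
  unfold IsChordRep
  omega

theorem filter_crosses_eq_image {i j : ℕ} (hij : IsChordRep n i j) :
    (chords n).filter (fun f => Crosses n f s((i : ZMod n), (j : ZMod n))) =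
      (Finset.Ico (i + 1) j ×ˢ Finset.Ico (j + 1) (i + n)).image
        fun p : ℕ × ℕ => s((p.1 : ZMod n), (p.2 : ZMod n)) := by
  obtain ⟨hij, hjn, hji⟩ := hij
  ext f
  simp only [Finset.mem_filter, Finset.mem_image, Finset.mem_product, Finset.mem_Ico, Prod.exists]
  constructor
  · rintro ⟨hf, hcr⟩
    obtain ⟨a, b, ⟨hab, hbn, hba⟩, rfl⟩ := exists_isChordRep_of_mem_chords hf
    rw [crosses_mk_iff, cycBtw_natCast_iff (by omega) (by omega) (by omega),
      cycBtw_natCast_iff (by omega) (by omega) (by omega),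
      cycBtw_natCast_iff (by omega) (by omega) (by omega),
      cycBtw_natCast_iff (by omega) (by omega) (by omega)] at hcr
    simp only [Xor] at hcr
    have lift : ∀ y < n, j < y ∨ y < i → ∃ l, (j + 1 ≤ l ∧ l < i + n) ∧ (l : ZMod n) = y :=
      fun y hy hyij => by
        rcases hyij with h | h
        · exact ⟨y, by omega, rfl⟩
        · exact ⟨y + n, by omega, by simp⟩
    rcases (by omega : i < a ∧ a < j ∧ (j < b ∨ b < i) ∨ i < b ∧ b < j ∧ (j < a ∨ a < i)) with
      ⟨hia, haj, hb⟩ | ⟨hib, hbj, ha⟩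
    · obtain ⟨l, hl, hlb⟩ := lift b (by omega) hb
      exact ⟨a, l, ⟨⟨by omega, haj⟩, hl⟩, by rw [hlb]⟩
    · obtain ⟨l, hl, hla⟩ := lift a (by omega) ha
      exact ⟨b, l, ⟨⟨by omega, hbj⟩, hl⟩, by rw [hla, Sym2.eq_swap]⟩
  · rintro ⟨k, l, ⟨⟨hik, hkj⟩, hjl, hli⟩, rfl⟩
    obtain ⟨l', hl'n, hll', hl'⟩ := exists_natCast_eq_of_lt_two_mul (n := n) (l := l) (by omega)
    rw [hll', mk_natCast_mem_chords_iff (by omega) hl'n, crosses_mk_iff,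
      cycBtw_natCast_iff (by omega) (by omega) (by omega),
      cycBtw_natCast_iff (by omega) (by omega) (by omega),
      cycBtw_natCast_iff (by omega) (by omega) (by omega),
      cycBtw_natCast_iff (by omega) (by omega) (by omega)]
    simp only [IsChordRep, Xor]
    omega

theorem one_sub_eq_prod_prod {K : Type*} [CommRing K] {v : Sym2 (ZMod n) → K}
    (hrel : ∀ e ∈ chords n, v e + ∏ f ∈ (chords n).filter (fun f => Crosses n f e), v f = 1)
    {i j : ℕ} (hij : IsChordRep n i j) :
    1 - v s((i : ZMod n), (j : ZMod n)) =
      ∏ k ∈ Finset.Ico (i + 1) j, ∏ l ∈ Finset.Ico (j + 1) (i + n),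
        v s((k : ZMod n), (l : ZMod n)) := by
  rw [← Finset.prod_product', ← Finset.prod_image (injOn_rectangle hij),
    ← filter_crosses_eq_image hij, ← hrel _ hij.mk_mem_chords, add_sub_cancel_left]

end Chords

theorem prod_Ico_prod_Ico_succ_mul {M : Type*} [CommMonoid M] (X : ℕ → ℕ → M) {r j m : ℕ}
    (hrj : r + 2 ≤ j) (hjm : j + 1 ≤ m) :
    (∏ k ∈ Finset.Ico (r + 2) j, ∏ l ∈ Finset.Ico (j + 1) (m + 1), X k l) *
        ∏ l ∈ Finset.Ico (j + 1) m, X (r + 1) l =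
      (∏ k ∈ Finset.Ico (r + 1) j, ∏ l ∈ Finset.Ico (j + 1) m, X k l) *
        ∏ k ∈ Finset.Ico (r + 2) j, X k m := by
  simp_rw [Finset.prod_Ico_succ_top hjm, Finset.prod_mul_distrib]
  rw [Finset.prod_eq_prod_Ico_succ_bot (show r + 1 < j by omega)]
  ac_rfl

section CrossRatio

variable {K : Type*} [Field K]

theorem prod_Ico_div_eq_div {g : ℕ → K} {a b : ℕ} (hab : a ≤ b)
    (hg : ∀ l ∈ Finset.Icc a b, g l ≠ 0) :
    ∏ l ∈ Finset.Ico a b, g (l + 1) / g l = g b / g a := by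
  induction b, hab using Nat.le_induction with
  | base => rw [Finset.Ico_self, Finset.prod_empty, div_self (hg a (by simp))]
  | succ b hab ih =>
    rw [Finset.prod_Ico_succ_top hab, ih fun l hl => hg l (Finset.Icc_subset_Icc_right
      b.le_succ hl), div_mul_div_cancel₀' (hg b (by simp [hab]))]

def det2 (p q : K × K) : K := p.1 * q.2 - q.1 * p.2

theorem det2_swap (p q : K × K) : det2 q p = -det2 p q := by
  unfold det2; ring

theorem det2_self (p : K × K) : det2 p p = 0 := by
  unfold det2; ring

theorem det2_mul_det2_sub_det2_mul_det2 (a b c d : K × K) :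
    det2 a c * det2 b d - det2 a d * det2 b c = det2 a b * det2 c d := by
  unfold det2; ring

/-- The homogeneous form of the dihedral coordinate `u_{ij}` of the points `Q 0, Q 1, …`. -/
def crossRatio (Q : ℕ → K × K) (i j : ℕ) : K :=
  det2 (Q i) (Q (j + 1)) * det2 (Q (i + 1)) (Q j) /
    (det2 (Q i) (Q j) * det2 (Q (i + 1)) (Q (j + 1)))

variable {Q : ℕ → K × K}

theorem crossRatio_comm (i j : ℕ) : crossRatio Q i j = crossRatio Q j i := by
  unfold crossRatio
  rw [det2_swap (Q j), det2_swap (Q (j + 1)) (Q i), det2_swap (Q j) (Q i),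
    det2_swap (Q (j + 1)) (Q (i + 1))]
  ring

theorem crossRatio_add_right {n : ℕ} (hQ : ∀ k, Q (k + n) = Q k) (i j : ℕ) :
    crossRatio Q i (j + n) = crossRatio Q i j := by
  unfold crossRatio
  rw [Nat.add_right_comm, hQ, hQ]

theorem crossRatio_eq_zero_of_eq {i j : ℕ} (h : Q (j + 1) = Q i) : crossRatio Q i j = 0 := by
  rw [crossRatio, h, det2_self, zero_mul, zero_div]

theorem one_sub_crossRatio {i j : ℕ} (h : det2 (Q i) (Q j) * det2 (Q (i + 1)) (Q (j + 1)) ≠ 0) :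
    1 - crossRatio Q i j = det2 (Q i) (Q (i + 1)) * det2 (Q j) (Q (j + 1)) /
      (det2 (Q i) (Q j) * det2 (Q (i + 1)) (Q (j + 1))) := by
  rw [crossRatio, one_sub_div h, det2_mul_det2_sub_det2_mul_det2]

theorem prod_Ico_crossRatio {m a b : ℕ} (hab : a ≤ b)
    (h : ∀ l ∈ Finset.Icc a b, det2 (Q m) (Q l) ≠ 0 ∧ det2 (Q (m + 1)) (Q l) ≠ 0) :
    ∏ l ∈ Finset.Ico a b, crossRatio Q m l =
      det2 (Q m) (Q b) * det2 (Q (m + 1)) (Q a) / (det2 (Q m) (Q a) * det2 (Q (m + 1)) (Q b)) := by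
  have htel : ∀ l, crossRatio Q m l =
      det2 (Q m) (Q (l + 1)) / det2 (Q (m + 1)) (Q (l + 1)) /
        (det2 (Q m) (Q l) / det2 (Q (m + 1)) (Q l)) := fun l => by
    rw [crossRatio, div_div_div_eq, mul_comm (det2 (Q (m + 1)) (Q (l + 1)))]
  simp_rw [htel]
  rw [prod_Ico_div_eq_div (g := fun l => det2 (Q m) (Q l) / det2 (Q (m + 1)) (Q l)) hab
    fun l hl => div_ne_zero (h l hl).1 (h l hl).2, div_div_div_eq,
    mul_comm (det2 (Q (m + 1)) (Q b))]

/-- Comparing the u-relations of the chords `(r, j)` and `(r + 1, j)`: the crossing rectangles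
differ by one row and one column, whose products telescope. -/
theorem one_sub_crossRatio_mul_prod {r j m : ℕ} (hrj : r + 2 ≤ j) (hjm : j + 1 ≤ m)
    (hQm : Q m = Q r)
    (hcol : ∀ k ∈ Finset.Icc (r + 2) j, det2 (Q r) (Q k) ≠ 0 ∧ det2 (Q (r + 1)) (Q k) ≠ 0)
    (hrow : ∀ l ∈ Finset.Icc (j + 1) m, det2 (Q (r + 1)) (Q l) ≠ 0 ∧ det2 (Q (r + 2)) (Q l) ≠ 0) :
    (1 - crossRatio Q (r + 1) j) * ∏ l ∈ Finset.Ico (j + 1) m, crossRatio Q (r + 1) l =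
      (1 - crossRatio Q r j) * ∏ k ∈ Finset.Ico (r + 2) j, crossRatio Q r k := by
  obtain ⟨h1, h2⟩ := hcol j (by simp [hrj])
  obtain ⟨h3, h4⟩ := hrow (j + 1) (by simp [hjm])
  obtain ⟨-, h5⟩ := hrow m (by simp [hjm])
  obtain ⟨h6, -⟩ := hcol (r + 2) (by simp [hrj])
  rw [hQm] at h5
  rw [prod_Ico_crossRatio hjm hrow, prod_Ico_crossRatio hrj hcol,
    one_sub_crossRatio (mul_ne_zero h2 h4), one_sub_crossRatio (mul_ne_zero h1 h3), hQm,
    det2_swap (Q (r + 1)) (Q r), det2_swap (Q (r + 2)) (Q r)]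
  field_simp

end CrossRatio

section Fan

variable {K : Type*} [Field K] {n : ℕ} (v : Sym2 (ZMod n) → K)

def fanCoord (k : ℕ) : K := ∏ l ∈ Finset.Ico 2 k, v s(0, (l : ZMod n))

/-- Homogeneous coordinates of `z₀ = 0`, `z₁ = ∞` and `z_k = fanCoord v k` for `2 ≤ k < n`,
extended `n`-periodically: `z_{k+1} / z_k = v {0, k}` is what the fan of chords at `0` requires. -/
def fanPoint (k : ℕ) : K × K :=
  if k % n = 0 then (0, 1) else if k % n = 1 then (1, 0) else (fanCoord v (k % n), 1)

theorem fanPoint_mod (k : ℕ) : fanPoint v (k % n) = fanPoint v k := by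
  simp only [fanPoint, Nat.mod_mod]

theorem fanPoint_add_self (k : ℕ) : fanPoint v (k + n) = fanPoint v k := by
  rw [← fanPoint_mod, Nat.add_mod_right, fanPoint_mod]

theorem fanPoint_zero : fanPoint v 0 = (0, 1) := by
  simp [fanPoint]

theorem fanPoint_self : fanPoint v n = (0, 1) := by
  simp [fanPoint]

theorem fanPoint_one (hn : 1 < n) : fanPoint v 1 = (1, 0) := by
  simp [fanPoint, Nat.mod_eq_of_lt hn]

theorem fanPoint_of_two_le {k : ℕ} (hk : 2 ≤ k) (hkn : k < n) :
    fanPoint v k = (fanCoord v k, 1) := by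
  rw [fanPoint, Nat.mod_eq_of_lt hkn, if_neg (by omega), if_neg (by omega)]

theorem fanPoint_ne_zero (k : ℕ) : fanPoint v k ≠ 0 := by
  unfold fanPoint
  split_ifs <;> simp

theorem fanCoord_succ {k : ℕ} (hk : 2 ≤ k) :
    fanCoord v (k + 1) = fanCoord v k * v s(0, (k : ZMod n)) :=
  Finset.prod_Ico_succ_top hk _

variable {v} [NeZero n]

theorem fanCoord_ne_zero (hv0 : ∀ e ∈ chords n, v e ≠ 0) {k : ℕ} (hk : k < n) : fanCoord v k ≠ 0 :=
  Finset.prod_ne_zero_iff.2 fun l hl => by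
    rw [Finset.mem_Ico] at hl
    simpa using hv0 _ (show IsChordRep n 0 l by unfold IsChordRep; omega).mk_mem_chords

end Fan

section Agreement

variable {K : Type*} [Field K] {n : ℕ} {v : Sym2 (ZMod n) → K} {r j : ℕ}

variable (v) in
def Agrees (a b : ℕ) : Prop := v s((a : ZMod n), (b : ZMod n)) = crossRatio (fanPoint v) a b

theorem Agrees.add_self {a b : ℕ} (h : Agrees v a b) : Agrees v b (a + n) := by
  rw [Agrees, Nat.cast_add, ZMod.natCast_self, add_zero, Sym2.eq_swap, h,
    crossRatio_add_right (fanPoint_add_self v), crossRatio_comm]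

/-- Agreement on every chord `(a, b)` that precedes `(r + 1, j)` in the order of the induction. -/
def AgreesBefore (v : Sym2 (ZMod n) → K) (r j : ℕ) : Prop :=
  ∀ a b, IsChordRep n a b → a ≤ r ∨ a = r + 1 ∧ j < b → Agrees v a b

theorem AgreesBefore.agrees_row (hagree : AgreesBefore v r j) (hrj : IsChordRep n (r + 1) j) {l : ℕ}
    (hl : l ∈ Finset.Ico (j + 1) (r + n)) : Agrees v (r + 1) l := by
  obtain ⟨h1, h2, h3⟩ := hrj
  rw [Finset.mem_Ico] at hl
  rcases Nat.lt_or_ge l n with hln | hln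
  · exact hagree _ _ (by unfold IsChordRep; omega) (by omega)
  · obtain ⟨l, rfl⟩ := Nat.exists_eq_add_of_le' hln
    exact (hagree l (r + 1) (by unfold IsChordRep; omega) (by omega)).add_self

theorem AgreesBefore.col_eq (hagree : AgreesBefore v r j) (hrj : IsChordRep n (r + 1) j) {k : ℕ}
    (hk : k ∈ Finset.Ico (r + 2) j) :
    v s((k : ZMod n), ((r + n : ℕ) : ZMod n)) = crossRatio (fanPoint v) r k := by
  obtain ⟨h1, h2, h3⟩ := hrj
  rw [Finset.mem_Ico] at hk
  rw [(hagree r k (by unfold IsChordRep; omega) (by omega)).add_self,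
    crossRatio_add_right (fanPoint_add_self v), crossRatio_comm]

variable [NeZero n]

theorem one_sub_ne_zero_of_isChordRep (hv0 : ∀ e ∈ chords n, v e ≠ 0)
    (hrel : ∀ e ∈ chords n, v e + ∏ f ∈ (chords n).filter (fun f => Crosses n f e), v f = 1)
    {i j : ℕ} (hij : IsChordRep n i j) : 1 - v s((i : ZMod n), (j : ZMod n)) ≠ 0 := by
  rw [← hrel _ hij.mk_mem_chords, add_sub_cancel_left]
  exact Finset.prod_ne_zero_iff.2 fun f hf => hv0 f (Finset.mem_filter.1 hf).1

theorem agrees_zero (hv0 : ∀ e ∈ chords n, v e ≠ 0) {j : ℕ} (hj : IsChordRep n 0 j) :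
    Agrees v 0 j := by
  obtain ⟨h1, h2, h3⟩ := hj
  rw [Agrees, crossRatio, fanPoint_zero, zero_add, fanPoint_one v (by omega),
    fanPoint_of_two_le v h1 h2, fanPoint_of_two_le v (by omega) (by omega), fanCoord_succ v h1,
    Nat.cast_zero]
  have := fanCoord_ne_zero hv0 h2
  simp only [det2]
  field_simp
  ring

theorem det2_fanPoint_ne_zero_of_le (hv0 : ∀ e ∈ chords n, v e ≠ 0)
    (hrel : ∀ e ∈ chords n, v e + ∏ f ∈ (chords n).filter (fun f => Crosses n f e), v f = 1)
    {p q : ℕ} (hpq : p < q) (hqn : q ≤ n) (hq : q < n + p)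
    (hknown : 2 ≤ p → p + 2 ≤ q → q < n → Agrees v (p - 1) q) :
    det2 (fanPoint v p) (fanPoint v q) ≠ 0 := by
  rcases Nat.lt_or_ge p 2 with hp | hp
  · rcases Nat.lt_or_ge q 2 with hq2 | hq2
    · obtain ⟨rfl, rfl⟩ : p = 0 ∧ q = 1 := by omega
      simp [det2, fanPoint_zero, fanPoint_one v (by omega)]
    rcases (by omega : q = n ∨ q < n) with rfl | hqn
    · obtain rfl : p = 1 := by omega
      simp [det2, fanPoint_self, fanPoint_one v hpq]
    interval_cases p
    · simpa [det2, fanPoint_zero, fanPoint_of_two_le v hq2 hqn] using fanCoord_ne_zero hv0 hqn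
    · simp [det2, fanPoint_one v (by omega), fanPoint_of_two_le v hq2 hqn]
  rcases (by omega : q = n ∨ q < n) with rfl | hqn
  · simpa [det2, fanPoint_self, fanPoint_of_two_le v hp hpq] using fanCoord_ne_zero hv0 hpq
  rcases (by omega : q = p + 1 ∨ p + 2 ≤ q) with rfl | hpq
  · rw [fanPoint_of_two_le v hp (by omega), fanPoint_of_two_le v (by omega) hqn, fanCoord_succ v hp]
    have h1 := one_sub_ne_zero_of_isChordRep hv0 hrel
      (show IsChordRep n 0 p by unfold IsChordRep; omega)
    have h2 := fanCoord_ne_zero hv0 (k := p) (by omega)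
    simp only [det2, Nat.cast_zero] at h1 ⊢
    convert mul_ne_zero h2 h1 using 1
    ring
  · have hchord : IsChordRep n (p - 1) q := by unfold IsChordRep; omega
    have hne : crossRatio (fanPoint v) (p - 1) q ≠ 0 := by
      rw [← hknown hp hpq hqn]
      exact hv0 _ hchord.mk_mem_chords
    rw [crossRatio, Nat.sub_add_cancel (by omega : 1 ≤ p)] at hne
    exact right_ne_zero_of_mul (div_ne_zero_iff.1 hne).1

theorem det2_fanPoint_ne_zero (hv0 : ∀ e ∈ chords n, v e ≠ 0)
    (hrel : ∀ e ∈ chords n, v e + ∏ f ∈ (chords n).filter (fun f => Crosses n f e), v f = 1)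
    (hagree : AgreesBefore v r j) {p q : ℕ} (hpq : p < q) (hpn : p < n) (hq : q < n + p)
    (hp : p ≤ r + 1 ∨ p = r + 2 ∧ j < q) :
    det2 (fanPoint v p) (fanPoint v q) ≠ 0 := by
  rcases Nat.lt_or_ge n q with hqn | hqn
  · obtain ⟨q, rfl⟩ := Nat.exists_eq_add_of_le hqn.le
    rw [add_comm n q, fanPoint_add_self, det2_swap, neg_ne_zero]
    exact det2_fanPoint_ne_zero_of_le hv0 hrel (by omega) hpn.le (by omega) fun _ _ _ =>
      hagree _ _ (by unfold IsChordRep; omega) (by omega)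
  · exact det2_fanPoint_ne_zero_of_le hv0 hrel hpq hqn hq fun _ _ _ =>
      hagree _ _ (by unfold IsChordRep; omega) (by omega)

/-- The product over the crossing rectangle of `(r, j)`, which is empty when `(r, j) = (0, n - 1)`
is not a chord. -/
theorem prod_prod_eq_one_sub_crossRatio
    (hrel : ∀ e ∈ chords n, v e + ∏ f ∈ (chords n).filter (fun f => Crosses n f e), v f = 1)
    (hagree : AgreesBefore v r j) (hrj : IsChordRep n (r + 1) j) :
    ∏ k ∈ Finset.Ico (r + 1) j, ∏ l ∈ Finset.Ico (j + 1) (r + n),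
      v s((k : ZMod n), (l : ZMod n)) = 1 - crossRatio (fanPoint v) r j := by
  by_cases hrj' : IsChordRep n r j
  · rw [← one_sub_eq_prod_prod hrel hrj', hagree r j hrj' (Or.inl le_rfl)]
  · obtain ⟨rfl, rfl⟩ : r = 0 ∧ n = j + 1 := by unfold IsChordRep at hrj hrj'; omega
    rw [crossRatio_eq_zero_of_eq (by rw [fanPoint_self, fanPoint_zero])]
    simp

theorem agrees_succ (hv0 : ∀ e ∈ chords n, v e ≠ 0)
    (hrel : ∀ e ∈ chords n, v e + ∏ f ∈ (chords n).filter (fun f => Crosses n f e), v f = 1)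
    (hagree : AgreesBefore v r j) (hrj : IsChordRep n (r + 1) j) : Agrees v (r + 1) j := by
  have hdet := fun p q => det2_fanPoint_ne_zero hv0 hrel hagree (p := p) (q := q)
  obtain ⟨h1, h2, h3⟩ := hrj
  have hv := prod_Ico_prod_Ico_succ_mul (fun k l => v s((k : ZMod n), (l : ZMod n)))
    (by omega : r + 2 ≤ j) (by omega : j + 1 ≤ r + n)
  rw [← Nat.add_right_comm, ← one_sub_eq_prod_prod hrel ⟨h1, h2, h3⟩,
    prod_prod_eq_one_sub_crossRatio hrel hagree ⟨h1, h2, h3⟩,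
    Finset.prod_congr rfl fun k hk => hagree.col_eq ⟨h1, h2, h3⟩ hk] at hv
  have hQ := one_sub_crossRatio_mul_prod (Q := fanPoint v) (by omega : r + 2 ≤ j)
    (by omega : j + 1 ≤ r + n) (fanPoint_add_self v r)
    (fun k hk => by
      rw [Finset.mem_Icc] at hk
      exact ⟨hdet _ _ (by omega) (by omega) (by omega) (by omega),
        hdet _ _ (by omega) (by omega) (by omega) (by omega)⟩)
    (fun l hl => by
      rw [Finset.mem_Icc] at hl
      exact ⟨hdet _ _ (by omega) (by omega) (by omega) (by omega),
        hdet _ _ (by omega) (by omega) (by omega) (by omega)⟩)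
  have hrow : ∏ l ∈ Finset.Ico (j + 1) (r + n), v s(((r + 1 : ℕ) : ZMod n), (l : ZMod n)) =
      ∏ l ∈ Finset.Ico (j + 1) (r + n), crossRatio (fanPoint v) (r + 1) l :=
    Finset.prod_congr rfl fun l hl => hagree.agrees_row ⟨h1, h2, h3⟩ hl
  have hrow_ne : ∏ l ∈ Finset.Ico (j + 1) (r + n), v s(((r + 1 : ℕ) : ZMod n), (l : ZMod n)) ≠ 0 :=
    Finset.prod_ne_zero_iff.2 fun l hl => by
      rw [Finset.mem_Ico] at hl
      exact hv0 _ (mk_natCast_mem_chords (by omega) (by omega) (by omega))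
  rw [← hv, ← hrow] at hQ
  exact (sub_right_inj.1 (mul_right_cancel₀ hrow_ne hQ)).symm

theorem agrees_of_isChordRep (hv0 : ∀ e ∈ chords n, v e ≠ 0)
    (hrel : ∀ e ∈ chords n, v e + ∏ f ∈ (chords n).filter (fun f => Crosses n f e), v f = 1)
    (a : ℕ) : ∀ b, IsChordRep n a b → Agrees v a b := by
  induction a using Nat.strong_induction_on with
  | _ a iha =>
  rcases a with _ | r
  · exact fun _ => agrees_zero hv0
  suffices ∀ m j, n - j = m → IsChordRep n (r + 1) j → Agrees v (r + 1) j from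
    fun j => this _ j rfl
  intro m
  induction m using Nat.strong_induction_on with
  | _ m ihm =>
  rintro j rfl hj
  refine agrees_succ hv0 hrel (fun a b hab hlt => ?_) hj
  rcases hlt with hlt | ⟨rfl, hlt⟩
  · exact iha a (by omega) b hab
  · exact ihm (n - b) (by unfold IsChordRep at hab; omega) b rfl hab

end Agreement

section Chart

variable {K : Type*} [Field K]

/-- The affine coordinate of a point of the projective line after the change of coordinates
`(x : y) ↦ (x : E x + y)`, which moves the point `(1 : -E)` to infinity. -/
def chart (E : K) (p : K × K) : K := p.1 / (E * p.1 + p.2)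

theorem chart_sub_chart {E : K} {p q : K × K} (hp : E * p.1 + p.2 ≠ 0) (hq : E * q.1 + q.2 ≠ 0) :
    chart E p - chart E q = det2 p q / ((E * p.1 + p.2) * (E * q.1 + q.2)) := by
  rw [chart, chart, div_sub_div _ _ hp hq, det2]
  ring_nf

theorem exists_chart_denom_ne_zero [Infinite K] {ι : Type*} [Fintype ι] (P : ι → K × K)
    (hP : ∀ i, P i ≠ 0) : ∃ E : K, ∀ i, E * (P i).1 + (P i).2 ≠ 0 := by
  classical
  obtain ⟨E, hE⟩ := Infinite.exists_notMem_finset (Finset.univ.image fun i => -(P i).2 / (P i).1)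
  refine ⟨E, fun i hi => ?_⟩
  by_cases h1 : (P i).1 = 0
  · rw [h1, mul_zero, zero_add] at hi
    exact hP i (Prod.ext h1 hi)
  · refine hE (Finset.mem_image.2 ⟨i, Finset.mem_univ _, ?_⟩)
    rw [div_eq_iff h1]
    linear_combination -hi

variable {n : ℕ} {E : K} {Q : ℕ → K × K}

theorem u_chart_natCast (hQ : ∀ k, Q (k % n) = Q k) (hE : ∀ k, E * (Q k).1 + (Q k).2 ≠ 0)
    (i j : ℕ) :
    u (fun x : ZMod n => chart E (Q x.val)) s((i : ZMod n), (j : ZMod n)) = crossRatio Q i j := by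
  have hval : ∀ k : ℕ, Q (k : ZMod n).val = Q k := fun k => by rw [ZMod.val_natCast, hQ]
  simp only [u, Sym2.lift_mk, ← Nat.cast_succ, hval, chart_sub_chart (hE _) (hE _), crossRatio]
  field_simp [hE]

theorem injective_chart [NeZero n] (hE : ∀ k, E * (Q k).1 + (Q k).2 ≠ 0)
    (hdet : ∀ p q, p < q → q < n → det2 (Q p) (Q q) ≠ 0) :
    Function.Injective fun x : ZMod n => chart E (Q x.val) := by
  intro x y hxy
  rw [← sub_eq_zero, chart_sub_chart (hE _) (hE _), div_eq_zero_iff,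
    or_iff_left (mul_ne_zero (hE _) (hE _))] at hxy
  refine ZMod.val_injective n (by_contra fun hne => ?_)
  rcases Nat.lt_or_gt_of_ne hne with h | h
  · exact hdet _ _ h (ZMod.val_lt y) hxy
  · exact hdet _ _ h (ZMod.val_lt x) (by rw [det2_swap, hxy, neg_zero])

end Chart

theorem u_relations_realize_general (n : ℕ) [NeZero n] (v : Sym2 (ZMod n) → ℂ)
    (hv0 : ∀ e ∈ chords n, v e ≠ 0)
    (hrel : ∀ e ∈ chords n,
      v e + ∏ f ∈ (chords n).filter (fun f => Crosses n f e), v f = 1) :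
    ∃ z : ZMod n → ℂ, Function.Injective z ∧ ∀ e ∈ chords n, u z e = v e := by
  have hagree := agrees_of_isChordRep hv0 hrel
  have hdet : ∀ p q, p < q → q < n → det2 (fanPoint v p) (fanPoint v q) ≠ 0 :=
    fun p q hpq hqn => det2_fanPoint_ne_zero hv0 hrel (r := n) (j := 0)
      (fun a b hab _ => hagree a b hab) hpq (by omega) (by omega) (Or.inl (by omega))
  obtain ⟨E, hE⟩ := exists_chart_denom_ne_zero (fun x : ZMod n => fanPoint v x.val)
    fun x => fanPoint_ne_zero v _
  have hE' : ∀ k, E * (fanPoint v k).1 + (fanPoint v k).2 ≠ 0 := fun k => by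
    simpa [ZMod.val_natCast, fanPoint_mod] using hE k
  refine ⟨fun x => chart E (fanPoint v x.val), injective_chart hE' hdet, fun e he => ?_⟩
  obtain ⟨i, j, hij, rfl⟩ := exists_isChordRep_of_mem_chords he
  rw [u_chart_natCast (fanPoint_mod v) hE', hagree i j hij]

/-- For `n ≥ 4`: any nowhere-zero complex solution of all primitive
u-relations is realized as the dihedral coordinates of an injective configuration
`z : ZMod n → ℂ`. -/
theorem u_relations_realize (n : ℕ) [NeZero n] (hn : 4 ≤ n) (v : Sym2 (ZMod n) → ℂ)
    (hv0 : ∀ e ∈ chords n, v e ≠ 0)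
    (hrel : ∀ e ∈ chords n,
      v e + ∏ f ∈ (chords n).filter (fun f => Crosses n f e), v f = 1) :
    ∃ z : ZMod n → ℂ, Function.Injective z ∧ ∀ e ∈ chords n, u z e = v e :=
  u_relations_realize_general n v hv0 hrel

end M0n
end

section
/- Let n ≥ 5 be an integer and let z : ZMod n → ℝ be injective with u_{{0,2}}(z) < 0 (the chord between the labels n ≡ 0 and 2). Let τ ∈ Perm(ZMod n) be the transposition exchanging 1 and 2. Then Neg(z ∘ τ) < Neg(z), i.e. the number of chords e with u_e(z ∘ τ) < 0 is strictly smaller than the number of chords e with u_e(z) < 0. -/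
section Sign

variable {α : Type*} [CommRing α] [LinearOrder α] [IsStrictOrderedRing α] {x y w : α}

theorem mul_neg_of_mul_neg_of_mul_nonneg (hy : y ≠ 0) (hxw : x * w < 0) (hxy : 0 ≤ x * y) :
    y * w < 0 := by
  have h : (x * y) * (y * w) < 0 := by
    rw [show x * y * (y * w) = x * w * (y * y) by ring]
    exact mul_neg_of_neg_of_pos hxw (mul_self_pos.mpr hy)
  exact neg_of_mul_neg_right h hxy

theorem mul_pos_of_mul_neg_of_mul_neg (hxy : x * y < 0) (hyw : y * w < 0) : 0 < x * w := by
  have h : 0 < x * w * (y * y) := by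
    rw [show x * w * (y * y) = x * y * (y * w) by ring]
    exact mul_pos_of_neg_of_neg hxy hyw
  exact pos_of_mul_pos_left h (mul_self_nonneg y)

end Sign

/-- Exactly one of `c`, `d` lies strictly between `a` and `b`. -/
def Interlaces (a b c d : ℝ) : Prop := (a - c) * (a - d) * ((b - c) * (b - d)) < 0

section Interlaces

variable {a b c d s t : ℝ}

theorem interlaces_comm_left : Interlaces b a c d ↔ Interlaces a b c d := by
  unfold Interlaces; rw [mul_comm]

theorem interlaces_comm_right : Interlaces a b d c ↔ Interlaces a b c d := by
  unfold Interlaces; ring_nf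

theorem interlaces_comm : Interlaces c d a b ↔ Interlaces a b c d := by
  unfold Interlaces; ring_nf

theorem interlaces_reverse : Interlaces d c b a ↔ Interlaces a b c d := by
  rw [interlaces_comm_left, interlaces_comm_right, interlaces_comm]

theorem interlaces_congr {a' b' c' d' : ℝ} (hab : s(a, b) = s(a', b'))
    (hcd : s(c, d) = s(c', d')) : Interlaces a b c d ↔ Interlaces a' b' c' d' := by
  rcases Sym2.eq_iff.mp hab with ⟨rfl, rfl⟩ | ⟨rfl, rfl⟩ <;>
  rcases Sym2.eq_iff.mp hcd with ⟨rfl, rfl⟩ | ⟨rfl, rfl⟩ <;>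
  simp only [interlaces_comm_left, interlaces_comm_right]

theorem Interlaces.not_interlaces_swap (h : Interlaces a b c d) : ¬ Interlaces a c b d := by
  -- With `X = (a - d) (b - c)` and `Y = (a - b) (c - d)` we have `(a - c) (b - d) = X + Y`:
  -- the hypothesis says `X (X + Y) < 0`, the conclusion `-X Y < 0`.
  unfold Interlaces at *
  nlinarith [sq_nonneg ((a - d) * (b - c))]

theorem sub_mul_sub_nonneg_of_mem_Icc {x y e : ℝ} (hx : x ∈ Set.Icc s t) (hy : y ∈ Set.Icc s t)
    (he : e ≤ s ∨ t ≤ e) : 0 ≤ (x - e) * (y - e) := by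
  obtain ⟨hsx, hxt⟩ := hx
  obtain ⟨hsy, hyt⟩ := hy
  rcases he with he | he
  · exact mul_nonneg (by linarith) (by linarith)
  · exact mul_nonneg_of_nonpos_of_nonpos (by linarith) (by linarith)

theorem Interlaces.interlaces_or_interlaces (h : Interlaces a b c d) (hbc : Interlaces b c s t) :
    Interlaces a b s t ∨ Interlaces c d s t := by
  wlog hst : s ≤ t generalizing s t
  · simpa only [interlaces_comm_right] using
      this (interlaces_comm_right.mpr hbc) (le_of_not_ge hst)
  wlog hb : (b - s) * (b - t) < 0 generalizing a b c d
  · have hc : (c - s) * (c - t) < 0 := by unfold Interlaces at hbc; nlinarith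
    simpa only [interlaces_comm_left, or_comm] using
      this (interlaces_reverse.mpr h) (interlaces_comm_left.mpr hbc) hc
  by_contra! hcon
  obtain ⟨hab, hcd⟩ := hcon
  have hc : 0 < (c - s) * (c - t) := pos_of_mul_neg_right hbc hb.le
  have ha := (sub_mul_sub_nonpos_iff a hst).mp (nonpos_of_mul_nonneg_left (not_lt.mp hab) hb)
  have hb' := (sub_mul_sub_neg_iff b hst).mp hb
  have hc' := (sub_mul_sub_pos_iff c hst).mp hc
  have hd := (sub_mul_sub_nonneg_iff d hst).mp (nonneg_of_mul_nonneg_right (not_lt.mp hcd) hc)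
  have hac := sub_mul_sub_nonneg_of_mem_Icc ha ⟨hb'.1.le, hb'.2.le⟩ (hc'.imp le_of_lt le_of_lt)
  have had := sub_mul_sub_nonneg_of_mem_Icc ha ⟨hb'.1.le, hb'.2.le⟩ hd
  -- `a, b ∈ [s, t]` and `c, d ∉ (s, t)`, so neither `c` nor `d` lies between `a` and `b`.
  unfold Interlaces at h
  nlinarith [mul_nonneg hac had]

theorem Interlaces.interlaces_cd_of_interlaces_ac (h : Interlaces a b c d)
    (hb : (b - s) * (b - t) ≠ 0) (hab : ¬ Interlaces a b s t) (hac : Interlaces a c s t) :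
    Interlaces c d s t ∧ ¬ Interlaces b d s t := by
  have hbc : Interlaces b c s t := mul_neg_of_mul_neg_of_mul_nonneg hb hac (not_lt.mp hab)
  have hcd := (h.interlaces_or_interlaces hbc).resolve_left hab
  exact ⟨hcd, (mul_pos_of_mul_neg_of_mul_neg hbc hcd).not_gt⟩

theorem Interlaces.interlaces_ab_of_interlaces_bd (h : Interlaces a b c d)
    (hc : (c - s) * (c - t) ≠ 0) (hcd : ¬ Interlaces c d s t) (hbd : Interlaces b d s t) :
    Interlaces a b s t ∧ ¬ Interlaces a c s t := by
  simpa only [interlaces_comm_left] using (interlaces_reverse.mpr h).interlaces_cd_of_interlaces_ac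
    hc (interlaces_comm_left.not.mpr hcd) (interlaces_comm_left.mpr hbd)

end Interlaces

theorem Finset.card_lt_card_of_involutive_mapsTo_sdiff {α : Type*} [DecidableEq α]
    {s t : Finset α} {σ : α → α} (hσ : Function.Involutive σ) {x₀ : α} (hx₀ : x₀ ∈ t \ s)
    (hfix : σ x₀ = x₀) (hmaps : ∀ x ∈ s \ t, σ x ∈ t \ s) : s.card < t.card := by
  rw [← Finset.card_sdiff_lt_card_sdiff_iff]
  have hne : ∀ x ∈ s \ t, σ x ≠ x₀ := fun x hx hσx => by
    rw [← hfix, hσ.injective.eq_iff] at hσx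
    exact (Finset.mem_sdiff.mp hx₀).2 (hσx ▸ (Finset.mem_sdiff.mp hx).1)
  calc (s \ t).card ≤ ((t \ s).erase x₀).card :=
        Finset.card_le_card_of_injOn σ (fun x hx => Finset.mem_erase.mpr ⟨hne x hx, hmaps x hx⟩)
          hσ.injective.injOn
    _ < (t \ s).card := Finset.card_erase_lt_of_mem hx₀

namespace M0n

section Configuration

variable {n : ℕ}

theorem u_neg_iff (f : ZMod n → ℝ) (i j : ZMod n) :
    u f s(i, j) < 0 ↔ Interlaces (f i) (f (i + 1)) (f j) (f (j + 1)) := by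
  rw [u, Sym2.lift_mk, div_neg_iff, ← mul_neg_iff, Interlaces]
  ring_nf

theorem ne_of_u_neg {f : ZMod n → ℝ} {i j : ZMod n} (h : u f s(i, j) < 0) :
    j ≠ i - 1 ∧ j ≠ i ∧ j ≠ i + 1 := by
  rw [u_neg_iff] at h
  refine ⟨?_, ?_, ?_⟩ <;> rintro rfl <;> simp [Interlaces] at h

theorem mem_chords_of_u_neg [NeZero n] {f : ZMod n → ℝ} {e : Sym2 (ZMod n)} (h : u f e < 0) :
    e ∈ chords n := by
  simp only [chords, Finset.mem_filter, Finset.mem_univ, true_and]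
  rintro i j rfl
  exact ne_of_u_neg h

theorem negCount_eq_card [NeZero n] (f : ZMod n → ℝ) :
    negCount n f = (Finset.univ.filter fun e => u f e < 0).card := by
  rw [negCount, ← Set.ncard_coe_finset]
  congr 1
  ext e
  simpa using mem_chords_of_u_neg

theorem comp_swap_side_of_ne (f : ZMod n → ℝ) {i : ZMod n} (h0 : i ≠ 0) (h2 : i ≠ 2) :
    s((f ∘ Equiv.swap 1 2) i, (f ∘ Equiv.swap 1 2) (i + 1)) = s(f i, f (i + 1)) := by
  by_cases h1 : i = 1
  · subst h1
    rw [one_add_one_eq_two, Function.comp_apply, Function.comp_apply, Equiv.swap_apply_left,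
      Equiv.swap_apply_right, Sym2.eq_swap]
  · have h1' : i + 1 ≠ 1 := fun h => h0 (add_right_cancel (h.trans (zero_add 1).symm))
    have h2' : i + 1 ≠ 2 := fun h => h1 (add_right_cancel (h.trans one_add_one_eq_two.symm))
    simp only [Function.comp_apply, Equiv.swap_apply_of_ne_of_ne h1 h2,
      Equiv.swap_apply_of_ne_of_ne h1' h2']

theorem comp_swap_side_zero (h20 : (2 : ZMod n) ≠ 0) (h21 : (2 : ZMod n) ≠ 1) (f : ZMod n → ℝ) :
    s((f ∘ Equiv.swap 1 2) 0, (f ∘ Equiv.swap 1 2) (0 + 1)) = s(f 0, f 2) := by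
  have h10 : (1 : ZMod n) ≠ 0 := fun h => h21 (by rw [← one_add_one_eq_two, h, zero_add])
  rw [zero_add, Function.comp_apply, Function.comp_apply, Equiv.swap_apply_left,
    Equiv.swap_apply_of_ne_of_ne h10.symm h20.symm]

theorem comp_swap_side_two (h20 : (2 : ZMod n) ≠ 0) (h21 : (2 : ZMod n) ≠ 1) (f : ZMod n → ℝ) :
    s((f ∘ Equiv.swap 1 2) 2, (f ∘ Equiv.swap 1 2) (2 + 1)) = s(f (0 + 1), f (2 + 1)) := by
  have h31 : (2 : ZMod n) + 1 ≠ 1 := fun h => h20 (add_right_cancel (h.trans (zero_add 1).symm))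
  have h32 : (2 : ZMod n) + 1 ≠ 2 := fun h =>
    h21 (add_right_cancel (h.trans one_add_one_eq_two.symm))
  rw [zero_add, Function.comp_apply, Function.comp_apply, Equiv.swap_apply_right,
    Equiv.swap_apply_of_ne_of_ne h31 h32]

variable {z : ZMod n → ℝ}

theorem u_comp_swap_neg_iff_of_ne {i j : ZMod n} (hi0 : i ≠ 0) (hi2 : i ≠ 2) (hj0 : j ≠ 0)
    (hj2 : j ≠ 2) : u (z ∘ Equiv.swap 1 2) s(i, j) < 0 ↔ u z s(i, j) < 0 := by
  rw [u_neg_iff, u_neg_iff,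
    interlaces_congr (comp_swap_side_of_ne z hi0 hi2) (comp_swap_side_of_ne z hj0 hj2)]

theorem not_u_comp_swap_neg_of_u_neg (h : u z s(0, 2) < 0) :
    ¬ u (z ∘ Equiv.swap 1 2) s(0, 2) < 0 := by
  obtain ⟨-, h20, h21⟩ := ne_of_u_neg h
  rw [zero_add] at h21
  rw [u_neg_iff, interlaces_congr (comp_swap_side_zero h20 h21 z) (comp_swap_side_two h20 h21 z)]
  exact ((u_neg_iff z 0 2).mp h).not_interlaces_swap

theorem u_neg_of_u_comp_swap_neg_zero (hz : Function.Injective z) (h : u z s(0, 2) < 0)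
    {j : ZMod n} (hj0 : j ≠ 0) (hj2 : j ≠ 2) (hw : u (z ∘ Equiv.swap 1 2) s(0, j) < 0)
    (hzj : ¬ u z s(0, j) < 0) :
    u z s(2, j) < 0 ∧ ¬ u (z ∘ Equiv.swap 1 2) s(2, j) < 0 := by
  obtain ⟨-, h20, h21⟩ := ne_of_u_neg h
  rw [zero_add] at h21
  have hj1 : j ≠ 0 + 1 := (ne_of_u_neg hw).2.2
  have hb : (z (0 + 1) - z j) * (z (0 + 1) - z (j + 1)) ≠ 0 :=
    mul_ne_zero (sub_ne_zero.mpr (hz.ne hj1.symm))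
      (sub_ne_zero.mpr (hz.ne fun h => hj0 (add_right_cancel h).symm))
  have hside := comp_swap_side_of_ne z hj0 hj2
  rw [u_neg_iff, interlaces_congr (comp_swap_side_zero h20 h21 z) hside] at hw
  rw [u_neg_iff, u_neg_iff, interlaces_congr (comp_swap_side_two h20 h21 z) hside]
  exact ((u_neg_iff z 0 2).mp h).interlaces_cd_of_interlaces_ac hb
    ((u_neg_iff z 0 j).not.mp hzj) hw

theorem u_neg_of_u_comp_swap_neg_two (hz : Function.Injective z) (h : u z s(0, 2) < 0)
    {j : ZMod n} (hj0 : j ≠ 0) (hj2 : j ≠ 2) (hw : u (z ∘ Equiv.swap 1 2) s(2, j) < 0)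
    (hzj : ¬ u z s(2, j) < 0) :
    u z s(0, j) < 0 ∧ ¬ u (z ∘ Equiv.swap 1 2) s(0, j) < 0 := by
  obtain ⟨-, h20, h21⟩ := ne_of_u_neg h
  rw [zero_add] at h21
  have hj1 : j ≠ 2 - 1 := (ne_of_u_neg hw).1
  have hc : (z 2 - z j) * (z 2 - z (j + 1)) ≠ 0 :=
    mul_ne_zero (sub_ne_zero.mpr (hz.ne (Ne.symm hj2)))
      (sub_ne_zero.mpr (hz.ne fun h => hj1 (eq_sub_of_add_eq h.symm)))
  have hside := comp_swap_side_of_ne z hj0 hj2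
  rw [u_neg_iff, interlaces_congr (comp_swap_side_two h20 h21 z) hside] at hw
  rw [u_neg_iff, u_neg_iff, interlaces_congr (comp_swap_side_zero h20 h21 z) hside]
  exact ((u_neg_iff z 0 2).mp h).interlaces_ab_of_interlaces_bd hc
    ((u_neg_iff z 2 j).not.mp hzj) hw

theorem u_neg_of_u_comp_swap_neg_of_left (hz : Function.Injective z) (h : u z s(0, 2) < 0)
    {i j : ZMod n} (hi : i = 0 ∨ i = 2) (hw : u (z ∘ Equiv.swap 1 2) s(i, j) < 0)
    (hzij : ¬ u z s(i, j) < 0) :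
    u z (s(i, j).map (Equiv.swap 0 2)) < 0 ∧
      ¬ u (z ∘ Equiv.swap 1 2) (s(i, j).map (Equiv.swap 0 2)) < 0 := by
  have hji : j ≠ i := (ne_of_u_neg hw).2.1
  by_cases hj : j = 0 ∨ j = 2
  · rcases hi with rfl | rfl <;> rcases hj with rfl | rfl
    · exact absurd rfl hji
    · exact absurd h hzij
    · exact absurd (Sym2.eq_swap ▸ h) hzij
    · exact absurd rfl hji
  rw [not_or] at hj
  rw [Sym2.map_mk, Equiv.swap_apply_of_ne_of_ne hj.1 hj.2]
  rcases hi with rfl | rfl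
  · rw [Equiv.swap_apply_left]
    exact u_neg_of_u_comp_swap_neg_zero hz h hj.1 hj.2 hw hzij
  · rw [Equiv.swap_apply_right]
    exact u_neg_of_u_comp_swap_neg_two hz h hj.1 hj.2 hw hzij

theorem u_neg_of_u_comp_swap_neg (hz : Function.Injective z) (h : u z s(0, 2) < 0)
    {e : Sym2 (ZMod n)} (hw : u (z ∘ Equiv.swap 1 2) e < 0) (hze : ¬ u z e < 0) :
    u z (e.map (Equiv.swap 0 2)) < 0 ∧ ¬ u (z ∘ Equiv.swap 1 2) (e.map (Equiv.swap 0 2)) < 0 := by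
  induction e using Sym2.ind with
  | h i j =>
    by_cases hi : i = 0 ∨ i = 2
    · exact u_neg_of_u_comp_swap_neg_of_left hz h hi hw hze
    by_cases hj : j = 0 ∨ j = 2
    · rw [Sym2.eq_swap] at hw hze ⊢
      exact u_neg_of_u_comp_swap_neg_of_left hz h hj hw hze
    rw [not_or] at hi hj
    exact absurd ((u_comp_swap_neg_iff_of_ne hi.1 hi.2 hj.1 hj.2).mp hw) hze

end Configuration

theorem swap_decreases_neg_length_two_general (n : ℕ) [NeZero n] (z : ZMod n → ℝ)
    (hz : Function.Injective z) (hneg : u z s((0 : ZMod n), (2 : ZMod n)) < 0) :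
    negCount n (fun k => z (Equiv.swap (1 : ZMod n) (2 : ZMod n) k)) < negCount n z := by
  have hσ : Function.Involutive (Sym2.map (Equiv.swap (0 : ZMod n) 2)) := fun e => by
    induction e using Sym2.ind with
    | h i j => simp
  show negCount n (z ∘ Equiv.swap 1 2) < negCount n z
  rw [negCount_eq_card, negCount_eq_card]
  refine Finset.card_lt_card_of_involutive_mapsTo_sdiff hσ (x₀ := s(0, 2)) ?_ ?_ ?_
  · simpa [hneg] using not_u_comp_swap_neg_of_u_neg hneg
  · rw [Sym2.map_mk, Equiv.swap_apply_left, Equiv.swap_apply_right, Sym2.eq_swap]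
  · intro e he
    simp only [Finset.mem_sdiff, Finset.mem_filter, Finset.mem_univ, true_and] at he ⊢
    exact u_neg_of_u_comp_swap_neg hz hneg he.1 he.2

/-- For `n ≥ 5` and injective `z : ZMod n → ℝ` with `u_{0,2}(z) < 0`,
swapping the labels `1` and `2` strictly decreases the number of negative chords. -/
theorem swap_decreases_neg_length_two (n : ℕ) [NeZero n] (hn : 5 ≤ n) (z : ZMod n → ℝ)
    (hz : Function.Injective z) (hneg : u z s((0 : ZMod n), (2 : ZMod n)) < 0) :
    negCount n (fun k => z (Equiv.swap (1 : ZMod n) (2 : ZMod n) k)) < negCount n z :=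
  swap_decreases_neg_length_two_general n z hz hneg

end M0n
end
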